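/- Let K be a field, f ∈ K[x] of degree n with f(0) ≠ 0, and a ∈ K[x] of degree exactly m, where 1 ≤ m < n. Then for every d ≥ ⌈n/m⌉, the block Hankel matrix Hk_{m,d}(a,f) ∈ K^{(md)×(md)} has rank n. -/

import Mathlib

open Polynomial Matrix

noncomputable section

variable {K : Type*} [Field K]

/-- Matrix of multiplication by `a` modulo `f` in the basis `1, x, ..., x^(n-1)`:
its `k`-th column is the coefficient vector of `(x^k * a) mod f`. -/
def mulMat (f a : K[X]) (n : ℕ) : Matrix (Fin n) (Fin n) K :=
  fun i k => ((X ^ (k : ℕ) * a) % f).coeff (i : ℕ)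

/-- The `n×m` matrix `X` whose top `m×m` block is the identity, over any `α`. -/
def Xup (α : Type*) [Zero α] [One α] (n m : ℕ) : Matrix (Fin n) (Fin m) α :=
  fun i j => if (i : ℕ) = (j : ℕ) then 1 else 0

/-- The block Hankel matrix `Hk_{m,d}(a,f)`, indexed by `Fin d × Fin m`
(block row/column index first): its `((i,r),(j,c))` entry is `(Xᵀ · M_a^(i+j) · X) r c`. -/
def hankelMat (f a : K[X]) (n m d : ℕ) :
    Matrix (Fin d × Fin m) (Fin d × Fin m) K :=
  fun p q => ((Xup K n m)ᵀ * (mulMat f a n) ^ ((p.1 : ℕ) + (q.1 : ℕ)) * Xup K n m) p.2 q.2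

/-!
The Hankel matrix factors as `O * C`, with block rows `Xᵀ M_a^i` and block columns `M_a^j X`,
so its rank is `n` once `C` is onto and `O` is one-to-one.  The columns of `C` are the
remainders of `x^c a^j` (`c < m`, `j < d`); these polynomials have the distinct degrees
`c + j m`, which fill `[0, d m) ⊇ [0, n)`, so they span all remainders.  A vector in the kernel
of `O` is the coefficient vector of some `p` with `deg p < n` such that `x^m` divides
`p a^i mod f` for every `i < d`.  Because `f(0) ≠ 0`, `x` is invertible modulo `f`, and induction
on `i` shows that `p a^i` is already reduced; for `i = d - 1` this gives
`deg p + (d - 1) m < n ≤ d m`, impossible if `p ≠ 0` since `x^m ∣ p`.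
-/

namespace Matrix

variable {ι κ n : Type*} [Fintype n]

lemma rank_mul_eq_card_of_injective_of_range_eq_top [Fintype κ]
    {A : Matrix ι n K} {B : Matrix n κ K} (hA : Function.Injective A.mulVecLin)
    (hB : LinearMap.range B.mulVecLin = ⊤) : (A * B).rank = Fintype.card n := by
  rw [rank, mulVecLin_mul, LinearMap.range_comp, hB, Submodule.map_top,
    LinearMap.finrank_range_of_inj hA, Module.finrank_fintype_fun_eq_card]

variable {R : Type*} [CommSemiring R] [DecidableEq n]

def obsMat (L : Matrix ι n R) (M : Matrix n n R) (d : ℕ) : Matrix (Fin d × ι) n R :=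
  of fun p k => (L * M ^ (p.1 : ℕ)) p.2 k

def krylovMat (M : Matrix n n R) (B : Matrix n κ R) (d : ℕ) : Matrix n (Fin d × κ) R :=
  of fun k q => (M ^ (q.1 : ℕ) * B) k q.2

end Matrix

lemma hankelMat_eq_obsMat_mul_krylovMat (f a : K[X]) (n m d : ℕ) :
    hankelMat f a n m d =
      (Xup K n m)ᵀ.obsMat (mulMat f a n) d * (mulMat f a n).krylovMat (Xup K n m) d := by
  ext p q
  rw [hankelMat, pow_add, ← Matrix.mul_assoc, Matrix.mul_assoc _ (_ ^ (q.1 : ℕ))]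
  rfl

lemma Fin.val_eq_val_iff_eq_castLE {n m : ℕ} (h : m ≤ n) (k : Fin n) (c : Fin m) :
    (k : ℕ) = c ↔ k = Fin.castLE h c := by
  simp [Fin.ext_iff]

lemma transpose_Xup_mul_apply {n m : ℕ} {ι : Type*} (h : m ≤ n) (B : Matrix (Fin n) ι K)
    (r : Fin m) (k : ι) : ((Xup K n m)ᵀ * B) r k = B (Fin.castLE h r) k := by
  simp [Xup, mul_apply, Fin.val_eq_val_iff_eq_castLE h]

lemma mul_Xup_apply {n m : ℕ} {ι : Type*} (h : m ≤ n) (B : Matrix ι (Fin n) K)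
    (k : ι) (c : Fin m) : (B * Xup K n m) k c = B k (Fin.castLE h c) := by
  simp [Xup, mul_apply, Fin.val_eq_val_iff_eq_castLE h]

namespace Polynomial

lemma mod_mod (p f : K[X]) : p % f % f = p % f := by
  rcases eq_or_ne f 0 with rfl | hf
  · simp
  · exact (mod_eq_self_iff hf).2 (degree_mod_lt p hf)

lemma mod_mul_mod (p b f : K[X]) : p % f * b % f = p * b % f := by
  rw [mul_mod, mod_mod, ← mul_mod]

lemma dvd_sub_mod (p f : K[X]) : f ∣ p - p % f :=
  ⟨p / f, by rw [EuclideanDomain.mod_eq_sub_mul_div]; ring⟩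

lemma eq_zero_of_X_pow_dvd_of_dvd_of_natDegree_lt {f p : K[X]} {m : ℕ} (hX : ¬X ∣ f)
    (hXp : X ^ m ∣ p) (hfp : f ∣ p) (hp : p.natDegree < f.natDegree + m) : p = 0 := by
  obtain ⟨q, rfl⟩ := hXp
  have hcop : IsCoprime f (X ^ m) := ((prime_X.coprime_iff_not_dvd.mpr hX).pow_left).symm
  have hfq : f ∣ q := hcop.dvd_of_dvd_mul_left (mul_comm (X ^ m) q ▸ hfp)
  rcases eq_or_ne q 0 with rfl | hq
  · rw [mul_zero]
  · rw [natDegree_mul (pow_ne_zero _ X_ne_zero) hq, natDegree_X_pow] at hp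
    rw [eq_zero_of_dvd_of_natDegree_lt hfq (by omega), mul_zero]

lemma eq_zero_of_forall_X_pow_dvd_mul_pow_mod {f a p : K[X]} {m d : ℕ} (hX : ¬X ∣ f)
    (ha : a.degree = m) (hp : p.degree < f.degree) (hfd : f.natDegree ≤ m * d)
    (h : ∀ i < d, X ^ m ∣ p * a ^ i % f) : p = 0 := by
  by_contra hp0
  have hf0 : f ≠ 0 := by rintro rfl; simp at hp
  have hpf : p.natDegree < f.natDegree := natDegree_lt_natDegree hp0 hp
  have hd : 0 < d := Nat.pos_of_ne_zero (by rintro rfl; omega)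
  have hp_mod : p % f = p := (mod_eq_self_iff hf0).2 hp
  have hXp : X ^ m ∣ p := by simpa [hp_mod] using h 0 hd
  -- `p * a ^ i` and its remainder are both divisible by `X ^ m` and differ by a multiple of `f`
  -- of degree `< deg f + m`; as `X` is invertible modulo `f`, they agree.
  have key : ∀ i < d, p * a ^ i % f = p * a ^ i := by
    intro i
    induction i with
    | zero => simpa using fun _ => hp_mod
    | succ i ih =>
      intro hi
      have hlt : (p * a ^ i).natDegree < f.natDegree :=
        ih (by omega) ▸ natDegree_mod_lt _ (by omega)
      have hdeg : (p * a ^ (i + 1)).natDegree < f.natDegree + m := by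
        rw [pow_succ, ← mul_assoc]
        exact natDegree_mul_le.trans_lt (by rw [natDegree_eq_of_degree_eq_some ha]; omega)
      refine (sub_eq_zero.mp (eq_zero_of_X_pow_dvd_of_dvd_of_natDegree_lt hX
        (dvd_sub (hXp.mul_right _) (h _ hi)) (dvd_sub_mod _ _)
        ((natDegree_sub_le _ _).trans_lt (max_lt hdeg ?_)))).symm
      exact (natDegree_mod_lt _ (by omega)).trans_le (Nat.le_add_right _ _)
  have ha0 : a ≠ 0 := by rintro rfl; simp at ha
  have hm : m ≤ p.natDegree := by simpa using natDegree_le_of_dvd hXp hp0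
  have hlast := natDegree_mod_lt (p * a ^ (d - 1)) (q := f) (by omega)
  rw [key _ (by omega), natDegree_mul hp0 (pow_ne_zero _ ha0), natDegree_pow,
    natDegree_eq_of_degree_eq_some ha] at hlast
  obtain ⟨e, rfl⟩ : ∃ e, d = e + 1 := ⟨d - 1, by omega⟩
  simp only [add_tsub_cancel_right] at hlast
  linarith

def xPowMulPowSeq (a : K[X]) {m : ℕ} (ha : a.degree = m) : Sequence K where
  elems' k := X ^ (k % m) * a ^ (k / m)
  degree_eq' k := by
    rw [degree_mul, degree_X_pow, degree_pow, ha, nsmul_eq_mul]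
    norm_cast
    rw [Nat.mod_add_div' k m]

lemma degreeLT_le_span_X_pow_mul_pow {a : K[X]} {m : ℕ} (ha : a.degree = m) (hm : 0 < m)
    (d : ℕ) : degreeLT K (m * d) ≤
      Submodule.span K (Set.range fun q : Fin d × Fin m => X ^ (q.2 : ℕ) * a ^ (q.1 : ℕ)) := by
  have ha0 : a ≠ 0 := by rintro rfl; simp at ha
  rw [← (xPowMulPowSeq a ha).span_degreeLT fun k _ => by simp [xPowMulPowSeq, ha0]]
  refine Submodule.span_mono ?_
  rintro _ ⟨k, hk, rfl⟩
  have hk : k < m * d := hk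
  exact ⟨(⟨k / m, Nat.div_lt_of_lt_mul hk⟩, ⟨k % m, Nat.mod_lt k hm⟩), rfl⟩

section RemainderCoefficients

variable {f : K[X]} {n : ℕ}

lemma mod_mem_degreeLT (hf : f.degree = n) (p : K[X]) : p % f ∈ degreeLT K n :=
  mem_degreeLT.mpr (hf ▸ degree_mod_lt p (by rintro rfl; simp at hf))

lemma mod_eq_self_of_mem_degreeLT (hf : f.degree = n) {p : K[X]} (hp : p ∈ degreeLT K n) :
    p % f = p :=
  (mod_eq_self_iff (by rintro rfl; simp at hf)).mpr (hf ▸ mem_degreeLT.mp hp)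

lemma eq_sum_monomial_of_mem_degreeLT {p : K[X]} (hp : p ∈ degreeLT K n) :
    p = ∑ k : Fin n, monomial k (p.coeff k) :=
  congrArg Subtype.val ((degreeLTEquiv K n).symm_apply_apply ⟨p, hp⟩).symm

def remCoeffs (f : K[X]) (n : ℕ) : K[X] →ₗ[K] Fin n → K where
  toFun p k := (p % f).coeff k
  map_add' p q := by ext; simp [add_mod]
  map_smul' c p := by ext; simp [mod_def, smul_modByMonic]

lemma remCoeffs_apply (p : K[X]) (k : Fin n) : remCoeffs f n p k = (p % f).coeff k := rfl

lemma remCoeffs_of_mem_degreeLT (hf : f.degree = n) {p : K[X]} (hp : p ∈ degreeLT K n) :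
    remCoeffs f n p = degreeLTEquiv K n ⟨p, hp⟩ := by
  ext k
  rw [remCoeffs_apply, mod_eq_self_of_mem_degreeLT hf hp]
  rfl

lemma remCoeffs_mul_eq_sum {p : K[X]} (hp : p ∈ degreeLT K n) (b : K[X]) :
    remCoeffs f n (p * b) = ∑ k : Fin n, p.coeff k • remCoeffs f n (X ^ (k : ℕ) * b) := by
  conv_lhs => rw [eq_sum_monomial_of_mem_degreeLT hp, Finset.sum_mul, map_sum]
  simp only [← C_mul_X_pow_eq_monomial, ← smul_eq_C_mul, smul_mul_assoc, map_smul]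

end RemainderCoefficients

end Polynomial

section HankelFactors

variable {f a : K[X]} {n m d : ℕ}

lemma mulMat_pow_apply (hf : f.degree = n) (i : ℕ) (r k : Fin n) :
    (mulMat f a n ^ i) r k = ((X ^ (k : ℕ) * a ^ i) % f).coeff r := by
  induction i generalizing k with
  | zero =>
    rw [pow_zero, pow_zero, mul_one, mod_eq_self_of_mem_degreeLT hf
      (mem_degreeLT.mpr ((degree_X_pow_le _).trans_lt (by exact_mod_cast k.2))),
      one_apply, coeff_X_pow]
    simp [Fin.ext_iff]
  | succ i ih =>
    rw [pow_succ' a, ← mul_assoc, ← mod_mul_mod, ← remCoeffs_apply,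
      remCoeffs_mul_eq_sum (mod_mem_degreeLT hf _), pow_succ, mul_apply]
    simp [ih, mulMat, remCoeffs_apply, mul_comm]

lemma krylovMat_apply (hf : f.degree = n) (hmn : m ≤ n) (k : Fin n) (q : Fin d × Fin m) :
    (mulMat f a n).krylovMat (Xup K n m) d k q =
      remCoeffs f n (X ^ (q.2 : ℕ) * a ^ (q.1 : ℕ)) k := by
  rw [krylovMat, of_apply, mul_Xup_apply hmn, mulMat_pow_apply hf, remCoeffs_apply,
    Fin.val_castLE]

lemma obsMat_mulVec_degreeLTEquiv (hf : f.degree = n) (hmn : m ≤ n) {p : K[X]}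
    (hp : p ∈ degreeLT K n) (q : Fin d × Fin m) :
    ((Xup K n m)ᵀ.obsMat (mulMat f a n) d *ᵥ degreeLTEquiv K n ⟨p, hp⟩) q =
      (p * a ^ (q.1 : ℕ) % f).coeff q.2 := by
  rw [← Fin.val_castLE hmn q.2, ← remCoeffs_apply, remCoeffs_mul_eq_sum hp]
  simp [mulVec, dotProduct, obsMat, transpose_Xup_mul_apply hmn, mulMat_pow_apply hf,
    remCoeffs_apply, degreeLTEquiv, mul_comm]

lemma range_krylovMat_mulVecLin (hf : f.degree = n) (ha : a.degree = m) (hm : 0 < m)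
    (hmn : m ≤ n) (hnd : n ≤ m * d) :
    LinearMap.range ((mulMat f a n).krylovMat (Xup K n m) d).mulVecLin = ⊤ := by
  have hcols : ((mulMat f a n).krylovMat (Xup K n m) d).col =
      remCoeffs f n ∘ fun q : Fin d × Fin m => X ^ (q.2 : ℕ) * a ^ (q.1 : ℕ) := by
    ext q k
    exact krylovMat_apply hf hmn k q
  rw [range_mulVecLin, hcols, Set.range_comp, Submodule.span_image, eq_top_iff]
  rintro v -
  set p := (degreeLTEquiv K n).symm v
  refine ⟨p, degreeLT_le_span_X_pow_mul_pow ha hm d (degreeLT_mono hnd p.2), ?_⟩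
  rw [remCoeffs_of_mem_degreeLT hf p.2, p.eta, LinearEquiv.apply_symm_apply]

lemma injective_obsMat_mulVecLin (hf : f.degree = n) (hX : ¬X ∣ f) (ha : a.degree = m)
    (hmn : m ≤ n) (hnd : n ≤ m * d) :
    Function.Injective ((Xup K n m)ᵀ.obsMat (mulMat f a n) d).mulVecLin := by
  rw [← LinearMap.ker_eq_bot, LinearMap.ker_eq_bot']
  intro u hu
  obtain ⟨⟨p, hp⟩, rfl⟩ := (degreeLTEquiv K n).surjective u
  have hp0 : p = 0 := by
    refine eq_zero_of_forall_X_pow_dvd_mul_pow_mod hX ha (hf ▸ mem_degreeLT.mp hp)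
      (natDegree_eq_of_degree_eq_some hf ▸ hnd) fun i hi => X_pow_dvd_iff.mpr fun r hr => ?_
    rw [← obsMat_mulVec_degreeLTEquiv hf hmn hp (⟨i, hi⟩, ⟨r, hr⟩)]
    exact congrFun hu _
  subst hp0
  exact map_zero _

end HankelFactors

/-- if `f(0) ≠ 0` and `deg a = m` with `1 ≤ m < n = deg f`,
the block Hankel matrix has rank `n` for every `d ≥ ⌈n/m⌉`. -/
theorem rank_hankel_of_deg_eq
    (n m : ℕ) (hm : 1 ≤ m) (hmn : m < n)
    (f a : K[X]) (hf : f.natDegree = n) (hf0 : f.eval 0 ≠ 0)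
    (ha : a.degree = (m : WithBot ℕ))
    (d : ℕ) (hd : n ⌈/⌉ m ≤ d) :
    (hankelMat f a n m d).rank = n := by
  have hfdeg : f.degree = n := by
    rw [degree_eq_natDegree (by rintro rfl; simp at hf0), hf]
  have hX : ¬X ∣ f := by rwa [X_dvd_iff, coeff_zero_eq_eval_zero]
  have hnd : n ≤ m * d := (ceilDiv_le_iff_le_mul hm).mp hd
  rw [hankelMat_eq_obsMat_mul_krylovMat, rank_mul_eq_card_of_injective_of_range_eq_top
    (injective_obsMat_mulVecLin hfdeg hX ha hmn.le hnd)
    (range_krylovMat_mulVecLin hfdeg ha hm hmn.le hnd), Fintype.card_fin]
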